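/- arXiv:2401.17540 — 2 statements merged into one kernel-verified Lean document; each statement's English description precedes it below -/
import Mathlib

section
/- Let A ∈ ℝ^{m×r} with rank r, and let γ ∈ range(A). Let v := A†γ, and suppose v_j ≠ 0 for some index j. Let Ā be A with its j-th column replaced by γ. Then Ā has rank r and Ā† = Θ^{−1} A†, where Θ is the identity matrix with its j-th column replaced by v. Explicitly, Ā†_{i·} = A†_{i·} + v̄_i·A†_{j·} for i ≠ j, and Ā†_{j·} = v̄_j·A†_{j·}, where v̄ := (1/v_j)(−v₁,…,−v_{j−1}, 1, −v_{j+1},…,−v_r)ᵀ. -/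
/-!
Replacing column `j` of `A` by `γ = A v` is right multiplication by `Θ = 1.updateCol j v`, and
`v = A†γ` because `A†A = 1`. When `v j ≠ 0`, `Θ` is invertible with inverse `1.updateCol j v̄`,
since `Θ v̄ = e_j`. For invertible `Θ` the inverses telescope:
`((AΘ)ᵀAΘ)⁻¹(AΘ)ᵀ = Θ⁻¹(AᵀA)⁻¹(Θᵀ)⁻¹ΘᵀAᵀ = Θ⁻¹A†`, and left multiplication by
`1.updateCol j v̄` adds `v̄ i` times row `j` to row `i ≠ j` and scales row `j` by `v̄ j`.
-/

open Matrix

local notation:max A:max "†" => (Aᵀ * A)⁻¹ * Aᵀ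

namespace Matrix

variable {m n o K : Type*} [Fintype n] [DecidableEq n]

theorem isUnit_of_rank_eq_card [Field K] {B : Matrix n n K} (h : B.rank = Fintype.card n) :
    IsUnit B := by
  rw [← mulVec_surjective_iff_isUnit]
  refine LinearMap.range_eq_top.mp
    (Submodule.eq_top_of_finrank_eq (S := LinearMap.range B.mulVecLin) ?_)
  rw [Module.finrank_fintype_fun_eq_card, ← h]
  rfl

theorem isUnit_transpose_mul_self_of_rank_eq_card [Fintype m] [Field K] [LinearOrder K]
    [IsStrictOrderedRing K] {A : Matrix m n K} (h : A.rank = Fintype.card n) :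
    IsUnit (Aᵀ * A) :=
  isUnit_of_rank_eq_card (by rw [rank_transpose_mul_self, h])

section CommRing

variable [Fintype m] [CommRing K]

theorem pinv_mulVec_mulVec {A : Matrix m n K} (hA : IsUnit (Aᵀ * A)) (x : n → K) :
    A† *ᵥ (A *ᵥ x) = x := by
  rw [mulVec_mulVec, Matrix.mul_assoc, nonsing_inv_mul _ ((isUnit_iff_isUnit_det _).mp hA),
    one_mulVec]

theorem pinv_mul_of_isUnit_det (A : Matrix m n K) {Θ : Matrix n n K} (hΘ : IsUnit Θ.det) :
    (A * Θ)† = Θ⁻¹ * A† := by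
  have hΘT : (Θᵀ)⁻¹ * Θᵀ = 1 := nonsing_inv_mul _ (by rwa [det_transpose])
  calc (A * Θ)†
      = (Θᵀ * (Aᵀ * A) * Θ)⁻¹ * (Θᵀ * Aᵀ) := by
        rw [transpose_mul]; simp only [Matrix.mul_assoc]
    _ = Θ⁻¹ * (Aᵀ * A)⁻¹ * ((Θᵀ)⁻¹ * Θᵀ) * Aᵀ := by
        rw [mul_inv_rev, mul_inv_rev]; simp only [Matrix.mul_assoc]
    _ = Θ⁻¹ * A† := by rw [hΘT, Matrix.mul_one, Matrix.mul_assoc]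

end CommRing

section CommSemiring

variable [CommSemiring K]

theorem updateCol_mulVec_eq_mul_updateCol_one [Fintype m] (A : Matrix m n K) (j : n)
    (v : n → K) :
    A.updateCol j (A *ᵥ v) = A * (1 : Matrix n n K).updateCol j v := by
  rw [mul_updateCol, Matrix.mul_one]

theorem updateCol_one_mulVec (j : n) (v w : n → K) :
    (1 : Matrix n n K).updateCol j v *ᵥ w = Function.update w j 0 + w j • v := by
  ext i
  simp only [mulVec, dotProduct, updateCol_apply, one_apply]
  rcases eq_or_ne i j with rfl | hi
  · rw [Fintype.sum_eq_single i (fun l hl => by simp [hl, Ne.symm hl])]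
    simp [mul_comm]
  · rw [Fintype.sum_eq_add j i hi.symm (fun l hl => by simp [hl.1, Ne.symm hl.2])]
    simp [hi, mul_comm, add_comm]

theorem updateCol_one_mul_apply_of_ne (j : n) (v : n → K) (P : Matrix n o K) {i : n}
    (hi : i ≠ j) :
    ((1 : Matrix n n K).updateCol j v * P) i = P i + v i • P j := by
  ext k
  change ((1 : Matrix n n K).updateCol j v *ᵥ Pᵀ k) i = _
  simp [updateCol_one_mulVec, hi, mul_comm]

theorem updateCol_one_mul_apply_self (j : n) (v : n → K) (P : Matrix n o K) :
    ((1 : Matrix n n K).updateCol j v * P) j = v j • P j := by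
  ext k
  change ((1 : Matrix n n K).updateCol j v *ᵥ Pᵀ k) j = _
  simp [updateCol_one_mulVec, mul_comm]

end CommSemiring

theorem updateCol_one_mul_updateCol_one_eq_one [Field K] {j : n} {v : n → K} (hv : v j ≠ 0) :
    (1 : Matrix n n K).updateCol j v *
      (1 : Matrix n n K).updateCol j (Function.update (-(v j)⁻¹ • v) j (v j)⁻¹) = 1 := by
  have hcol : (1 : Matrix n n K).updateCol j v *ᵥ Function.update (-(v j)⁻¹ • v) j (v j)⁻¹ =
      fun i => (1 : Matrix n n K) i j := by
    ext i
    rw [updateCol_one_mulVec]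
    rcases eq_or_ne i j with rfl | hi
    · simp [hv]
    · simp [hi]
  rw [mul_updateCol, Matrix.mul_one, updateCol_idem, hcol, updateCol_eq_self]

end Matrix

/-- Column replacement and the pseudoinverse: if `Ā` is `A` with column `j` replaced by
`γ ∈ range(A)` and `v := A†γ` has `v_j ≠ 0`, then `Ā` has rank `r`,
`Ā† = Θ⁻¹ A†` where `Θ` is the identity with column `j` replaced by `v`, and explicitly
`Ā†_{i·} = A†_{i·} + v̄_i A†_{j·}` for `i ≠ j` and `Ā†_{j·} = v̄_j A†_{j·}`. -/
theorem pinv_column_replacement (m r : ℕ) (A : Matrix (Fin m) (Fin r) ℝ)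
    (hr : A.rank = r) (γ : Fin m → ℝ) (hγ : ∃ x, A.mulVec x = γ)
    (j : Fin r)
    (hvj : ((Aᵀ * A)⁻¹ * Aᵀ).mulVec γ j ≠ 0) :
    (A.updateCol j γ).rank = r ∧
    ((A.updateCol j γ)ᵀ * A.updateCol j γ)⁻¹ * (A.updateCol j γ)ᵀ =
      ((1 : Matrix (Fin r) (Fin r) ℝ).updateCol j (((Aᵀ * A)⁻¹ * Aᵀ).mulVec γ))⁻¹ *
        ((Aᵀ * A)⁻¹ * Aᵀ) ∧
    (∀ i, i ≠ j →
      (((A.updateCol j γ)ᵀ * A.updateCol j γ)⁻¹ * (A.updateCol j γ)ᵀ) i =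
        ((Aᵀ * A)⁻¹ * Aᵀ) i +
          (-(((Aᵀ * A)⁻¹ * Aᵀ).mulVec γ i) / ((Aᵀ * A)⁻¹ * Aᵀ).mulVec γ j) •
            ((Aᵀ * A)⁻¹ * Aᵀ) j) ∧
    (((A.updateCol j γ)ᵀ * A.updateCol j γ)⁻¹ * (A.updateCol j γ)ᵀ) j =
      (1 / ((Aᵀ * A)⁻¹ * Aᵀ).mulVec γ j) • ((Aᵀ * A)⁻¹ * Aᵀ) j := by
  obtain ⟨x, rfl⟩ := hγ
  have hA := isUnit_transpose_mul_self_of_rank_eq_card (by rwa [Fintype.card_fin])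
  rw [pinv_mulVec_mulVec hA] at hvj ⊢
  set Θ := (1 : Matrix (Fin r) (Fin r) ℝ).updateCol j x
  have hΘ := updateCol_one_mul_updateCol_one_eq_one hvj
  have hΘdet : IsUnit Θ.det := isUnit_det_of_right_inverse hΘ
  have hpinv : (A.updateCol j (A *ᵥ x))† = Θ⁻¹ * A† := by
    rw [updateCol_mulVec_eq_mul_updateCol_one, pinv_mul_of_isUnit_det _ hΘdet]
  refine ⟨?_, hpinv, fun i hi => ?_, ?_⟩
  · rw [updateCol_mulVec_eq_mul_updateCol_one, rank_mul_eq_left_of_isUnit_det _ _ hΘdet, hr]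
  · rw [hpinv, inv_eq_right_inv hΘ, updateCol_one_mul_apply_of_ne _ _ _ hi,
      Function.update_of_ne hi]
    congr 2
    simp only [Pi.smul_apply, smul_eq_mul]
    ring
  · rw [hpinv, inv_eq_right_inv hΘ, updateCol_one_mul_apply_self, Function.update_self, one_div]
end

section
/- Let A ∈ ℝ^{m×n} with rank(A) = r, let T be a set of r column indices with Â := A[·,T] of rank r, and S a set of r row indices such that Ã := A[S,T] is nonsingular. Suppose Ã is a (1+ε)-local maximizer of the absolute determinant among r×r nonsingular submatrices of A[S,·] (i.e., swapping any one column of T for a column outside T increases |det| by a factor of at most 1+ε). Then the column-block matrix H constructed from Â (rows T equal to Â†, other rows zero) is an ah-symmetric reflexive generalized inverse of A satisfying ‖H‖_{2,1} ≤ r(1+ε)·‖H_opt‖_{2,1}, where H_opt minimizes ‖·‖_{2,1} over all matrices satisfying AHA = A. -/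
/-!
Because `Ã = A[S,T]` is invertible, `Â = A[·,T]` has full column rank, so `Â†Â = 1`; since moreover
`rank Â = rank A`, the columns of `Â` span the column space of `A`, hence `ÂÂ†A = A`, and the
Penrose identities for `H = PÂ†` (with `P` the column selection) follow.

For the bound, `W := Â†A` solves `ÃW = A[S,·]`, so by Cramer's rule and local maximality every
entry of `W` has absolute value at most `1 + ε`. If `AGA = A`, then `WG` is a left inverse of `Â`.
Each row of `Â†` lies in the row space of `Âᵀ`, so it is the minimum-norm solution of its equation
`x Â = eₖ` and is no longer than the corresponding row of `WG`, which is a combination of the rows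
of `G` with coefficients bounded by `1 + ε`. Summing over the `r` rows gives the factor `r(1 + ε)`.
-/

open Matrix Finset

namespace Matrix

variable {m n r s K : Type*}

section Field

variable [Field K]

theorem exists_mul_eq_of_range_mulVecLin_le [Fintype n] [Fintype r] {A : Matrix m n K}
    {B : Matrix m r K} (h : LinearMap.range A.mulVecLin ≤ LinearMap.range B.mulVecLin) :
    ∃ X : Matrix r n K, B * X = A := by
  classical
  choose x hx using fun j => h ⟨Pi.single j 1, rfl⟩
  refine ⟨(of x)ᵀ, ?_⟩
  ext i j
  exact (congrFun (hx j) i).trans (by simp [mulVec_single])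

theorem exists_mul_mul_eq_of_rank_le [Fintype m] [Fintype n] [Fintype r] {A : Matrix m n K}
    {P : Matrix n r K} (h : A.rank ≤ (A * P).rank) : ∃ X : Matrix r n K, A * P * X = A := by
  refine exists_mul_eq_of_range_mulVecLin_le (Submodule.eq_of_le_of_finrank_le ?_ h).ge
  rw [mulVecLin_mul]
  exact LinearMap.range_comp_le_range _ _

theorem mulVec_injective_of_submatrix [Fintype r] {A : Matrix m r K} (S : s → m)
    (h : Function.Injective (A.submatrix S id).mulVec) : Function.Injective A.mulVec :=
  fun _ _ hxy => h (funext fun i => congrFun hxy (S i))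

theorem inv_mul_apply_eq_det_updateCol_div [Fintype r] [DecidableEq r] {A : Matrix r r K}
    (hA : A.det ≠ 0) (M : Matrix r n K) (k : r) (j : n) :
    (A⁻¹ * M) k j = (A.updateCol k fun i => M i j).det / A.det := by
  have := congrFun (det_smul_inv_mulVec_eq_cramer A (fun i => M i j) hA.isUnit) k
  rw [cramer_apply] at this
  rw [eq_div_iff hA, ← this]
  simp [mulVec, dotProduct, mul_apply, mul_comm]

theorem mul_one_submatrix_id [Fintype n] [DecidableEq n] (A : Matrix m n K) (T : r → n) :
    A * (1 : Matrix n n K).submatrix id T = A.submatrix id T := by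
  ext i k
  simp [mul_apply, one_apply]

theorem eq_one_submatrix_mul_of_rows [Fintype r] [DecidableEq n] {T : r → n}
    (hT : Function.Injective T) {H : Matrix n m K} {D : Matrix r m K}
    (hrows : ∀ k, H (T k) = D k) (hzero : ∀ j, (∀ k, T k ≠ j) → H j = 0) :
    H = (1 : Matrix n n K).submatrix id T * D := by
  classical
  ext j i
  by_cases hj : ∃ k, T k = j
  · obtain ⟨k, rfl⟩ := hj
    simp [mul_apply, one_apply, hT.eq_iff, hrows]
  · push Not at hj
    simp [mul_apply, hzero j hj, fun k => (hj k).symm]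

/-- `B† = (BᵀB)⁻¹Bᵀ`, the Moore–Penrose inverse when `B` has full column rank (and junk otherwise,
as then `(BᵀB)⁻¹ = 0`). -/
noncomputable def leftPinv [Fintype m] [Fintype r] [DecidableEq r] (B : Matrix m r K) :
    Matrix r m K :=
  (Bᵀ * B)⁻¹ * Bᵀ

variable [Fintype m] [Fintype r] [DecidableEq r]

theorem leftPinv_mul_self {B : Matrix m r K} (hB : IsUnit (Bᵀ * B)) : B.leftPinv * B = 1 := by
  rw [leftPinv, Matrix.mul_assoc]
  exact nonsing_inv_mul _ ((isUnit_iff_isUnit_det _).1 hB)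

theorem transpose_mul_leftPinv (B : Matrix m r K) : (B * B.leftPinv)ᵀ = B * B.leftPinv := by
  rw [leftPinv, transpose_mul, transpose_mul, transpose_transpose, transpose_nonsing_inv,
    transpose_mul, transpose_transpose, Matrix.mul_assoc]

theorem mul_leftPinv_mul_of_rank_le [Fintype n] {A : Matrix m n K} {P : Matrix n r K}
    {B : Matrix m r K} (hAP : A * P = B) (hB : IsUnit (Bᵀ * B)) (hrank : A.rank ≤ B.rank) :
    B * B.leftPinv * A = A := by
  obtain ⟨X, hX⟩ := exists_mul_mul_eq_of_rank_le (hAP ▸ hrank)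
  rw [← hX, hAP, Matrix.mul_assoc B, ← Matrix.mul_assoc B.leftPinv, leftPinv_mul_self hB,
    Matrix.one_mul]

def IsAhSymmetricReflexiveGInverse [Fintype n] (A : Matrix m n K) (H : Matrix n m K) : Prop :=
  A * H * A = A ∧ H * A * H = H ∧ (A * H)ᵀ = A * H

theorem isAhSymmetricReflexiveGInverse_mul_leftPinv [Fintype n] {A : Matrix m n K}
    {P : Matrix n r K} {B : Matrix m r K} (hAP : A * P = B) (hB : IsUnit (Bᵀ * B))
    (hproj : B * B.leftPinv * A = A) : IsAhSymmetricReflexiveGInverse A (P * B.leftPinv) := by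
  have hAH : A * (P * B.leftPinv) = B * B.leftPinv := by rw [← Matrix.mul_assoc, hAP]
  refine ⟨by rw [hAH, hproj], ?_, hAH ▸ transpose_mul_leftPinv B⟩
  rw [Matrix.mul_assoc, hAH, Matrix.mul_assoc, ← Matrix.mul_assoc B.leftPinv,
    leftPinv_mul_self hB, Matrix.one_mul]

end Field

section OrderedField

variable [Field K] [LinearOrder K] [IsStrictOrderedRing K]

theorem sum_sq_le_of_vecMul_eq [Fintype m] [Fintype r] {B : Matrix m r K} {u v : m → K}
    {c : r → K} (hu : u = B *ᵥ c) (h : v ᵥ* B = u ᵥ* B) : ∑ j, u j ^ 2 ≤ ∑ j, v j ^ 2 := by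
  have horth : (v - u) ⬝ᵥ u = 0 := by
    rw [hu, dotProduct_mulVec, sub_vecMul, ← hu, h, sub_self, zero_dotProduct]
  have hexpand : ∑ j, v j ^ 2 = ∑ j, u j ^ 2 + 2 * ((v - u) ⬝ᵥ u) + ∑ j, (v j - u j) ^ 2 := by
    simp only [dotProduct, Pi.sub_apply, mul_sum, ← sum_add_distrib]
    exact sum_congr rfl fun j _ => by ring
  rw [hexpand, horth]
  linarith [sum_nonneg fun j (_ : j ∈ univ) => sq_nonneg (v j - u j)]

theorem sum_sq_leftPinv_apply_le [Fintype m] [Fintype r] [DecidableEq r] {B : Matrix m r K}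
    (hB : IsUnit (Bᵀ * B)) {X : Matrix r m K} (hX : X * B = 1) (k : r) :
    ∑ j, B.leftPinv k j ^ 2 ≤ ∑ j, X k j ^ 2 :=
  sum_sq_le_of_vecMul_eq (c := (Bᵀ * B)⁻¹ k)
    (by rw [leftPinv, mul_apply_eq_vecMul, vecMul_transpose])
    (by rw [← mul_apply_eq_vecMul, ← mul_apply_eq_vecMul, hX, leftPinv_mul_self hB])

theorem abs_inv_mul_submatrix_apply_le [Fintype r] [DecidableEq r] (A : Matrix m n K)
    {S : r → m} {T : r → n} {ε : K} (hε : 0 ≤ ε) (hdet : (A.submatrix S T).det ≠ 0)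
    (hlocal : ∀ k j, (∀ k', T k' ≠ j) →
      |((A.submatrix S T).updateCol k fun i => A (S i) j).det| ≤
        (1 + ε) * |(A.submatrix S T).det|) (k : r) (j : n) :
    |((A.submatrix S T)⁻¹ * A.submatrix S id) k j| ≤ 1 + ε := by
  by_cases hj : ∃ k', T k' = j
  · obtain ⟨k', rfl⟩ := hj
    have : ((A.submatrix S T)⁻¹ * A.submatrix S id) k (T k') = (1 : Matrix r r K) k k' := by
      rw [← nonsing_inv_mul _ hdet.isUnit]
      rfl
    rw [this, one_apply]
    split_ifs <;> simp <;> linarith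
  · push Not at hj
    rw [inv_mul_apply_eq_det_updateCol_div hdet, abs_div, div_le_iff₀ (abs_pos.2 hdet)]
    exact hlocal k j hj

end OrderedField

section Real

theorem isUnit_transpose_mul_self [Fintype m] [Fintype r] [DecidableEq r] {B : Matrix m r ℝ}
    (hB : Function.Injective B.mulVec) : IsUnit (Bᵀ * B) := by
  simpa [conjTranspose_eq_transpose_of_trivial] using (PosDef.conjTranspose_mul_self B hB).isUnit

theorem sqrt_sum_sq_vecMul_le [Fintype m] [Fintype n] (w : n → ℝ) (G : Matrix n m ℝ) :
    √(∑ j, (w ᵥ* G) j ^ 2) ≤ ∑ i, |w i| * √(∑ j, G i j ^ 2) := by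
  have hnorm : ∀ v : m → ℝ, √(∑ j, v j ^ 2) = ‖WithLp.toLp 2 v‖ := fun v => by
    simp [EuclideanSpace.norm_eq]
  simp_rw [hnorm, vecMul_eq_sum, WithLp.toLp_sum, WithLp.toLp_smul]
  refine (norm_sum_le _ _).trans_eq (sum_congr rfl fun i _ => ?_)
  rw [norm_smul, Real.norm_eq_abs]

theorem sqrt_sum_sq_leftPinv_apply_le [Fintype m] [Fintype n] [Fintype r] [DecidableEq r]
    {B : Matrix m r ℝ} (hB : IsUnit (Bᵀ * B)) {W : Matrix r n ℝ} {G : Matrix n m ℝ}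
    (hWG : W * G * B = 1) {c : ℝ} {k : r} (hW : ∀ i, |W k i| ≤ c) :
    √(∑ j, B.leftPinv k j ^ 2) ≤ c * ∑ i, √(∑ j, G i j ^ 2) :=
  calc √(∑ j, B.leftPinv k j ^ 2)
      ≤ √(∑ j, (W k ᵥ* G) j ^ 2) := Real.sqrt_le_sqrt (sum_sq_leftPinv_apply_le hB hWG k)
    _ ≤ ∑ i, |W k i| * √(∑ j, G i j ^ 2) := sqrt_sum_sq_vecMul_le _ _
    _ ≤ ∑ i, c * √(∑ j, G i j ^ 2) :=
      sum_le_sum fun i _ => mul_le_mul_of_nonneg_right (hW i) (Real.sqrt_nonneg _)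
    _ = c * ∑ i, √(∑ j, G i j ^ 2) := (mul_sum _ _ _).symm

end Real

end Matrix

theorem local_search_21_approx_general (m n r : ℕ) (A : Matrix (Fin m) (Fin n) ℝ)
    (hrA : A.rank = r) (ε : ℝ) (hε : 0 ≤ ε)
    (S : Fin r → Fin m)
    (T : Fin r → Fin n) (hT : Function.Injective T)
    (hdet : (A.submatrix S T).det ≠ 0)
    (hlocal : ∀ (k : Fin r) (j : Fin n), (∀ k', T k' ≠ j) →
      |((A.submatrix S T).updateCol k (fun i => A (S i) j)).det| ≤
        (1 + ε) * |(A.submatrix S T).det|)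
    (H : Matrix (Fin n) (Fin m) ℝ)
    (hHrows : ∀ k, H (T k) =
      (((A.submatrix id T)ᵀ * A.submatrix id T)⁻¹ * (A.submatrix id T)ᵀ) k)
    (hHzero : ∀ j, (∀ k, T k ≠ j) → H j = 0) :
    A * H * A = A ∧ H * A * H = H ∧ (A * H)ᵀ = A * H ∧
    ∀ G : Matrix (Fin n) (Fin m) ℝ, A * G * A = A →
      (∑ i, Real.sqrt (∑ j, (H i j) ^ 2)) ≤
        r * (1 + ε) * ∑ i, Real.sqrt (∑ j, (G i j) ^ 2) := by
  set Â := A.submatrix id T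
  have hAP : A * (1 : Matrix (Fin n) (Fin n) ℝ).submatrix id T = Â := mul_one_submatrix_id A T
  have hÂ : IsUnit (Âᵀ * Â) := isUnit_transpose_mul_self <| mulVec_injective_of_submatrix S <|
    mulVec_injective_iff_isUnit.2 <| (isUnit_iff_isUnit_det _).2 hdet.isUnit
  have hrows : ∀ k, H (T k) = Â.leftPinv k := hHrows
  have hproj : Â * Â.leftPinv * A = A := mul_leftPinv_mul_of_rank_le hAP hÂ <| by
    simpa [hrA, leftPinv_mul_self hÂ] using rank_mul_le_right Â.leftPinv Â
  obtain ⟨hAHA, hHAH, hAH⟩ : IsAhSymmetricReflexiveGInverse A H := by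
    rw [eq_one_submatrix_mul_of_rows hT hrows hHzero]
    exact isAhSymmetricReflexiveGInverse_mul_leftPinv hAP hÂ hproj
  refine ⟨hAHA, hHAH, hAH, fun G hG => ?_⟩
  have hW : Â.leftPinv * A = (A.submatrix S T)⁻¹ * A.submatrix S id := by
    rw [← nonsing_inv_mul_cancel_left (A.submatrix S T) (Â.leftPinv * A) hdet.isUnit]
    exact congrArg (fun M => (A.submatrix S T)⁻¹ * M.submatrix S id)
      ((Matrix.mul_assoc _ _ _).symm.trans hproj)
  have hWG : Â.leftPinv * A * G * Â = 1 := by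
    have hAGÂ : A * G * Â = Â := by rw [← hAP, ← Matrix.mul_assoc, hG]
    rw [Matrix.mul_assoc, Matrix.mul_assoc, ← Matrix.mul_assoc A G, hAGÂ, leftPinv_mul_self hÂ]
  have hrow (k : Fin r) := sqrt_sum_sq_leftPinv_apply_le hÂ hWG (c := 1 + ε) (k := k)
    fun i => hW ▸ abs_inv_mul_submatrix_apply_le A hε hdet hlocal k i
  calc ∑ i, √(∑ j, H i j ^ 2) = ∑ k, √(∑ j, Â.leftPinv k j ^ 2) :=
        (Fintype.sum_of_injective T hT _ _ (fun j hj => by simp [hHzero j (by simpa using hj)])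
          fun k => by rw [hrows k]).symm
    _ ≤ ∑ _k : Fin r, (1 + ε) * ∑ i, √(∑ j, G i j ^ 2) := sum_le_sum fun k _ => hrow k
    _ = r * (1 + ε) * ∑ i, √(∑ j, G i j ^ 2) := by simp [mul_assoc]

/-- 2,1-norm approximation guarantee of the determinant-based local search:
if `Ã := A[S,T]` is a `(1+ε)`-local maximizer of the absolute determinant among
`r×r` nonsingular submatrices of `A[S,·]`, then the column-block matrix `H`
(rows `T` equal to `Â† = (ÂᵀÂ)⁻¹Âᵀ` for `Â := A[·,T]`, other rows zero) is an
ah-symmetric reflexive generalized inverse of `A` with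
`‖H‖_{2,1} ≤ r(1+ε)·‖G‖_{2,1}` for every generalized inverse `G` of `A`. -/
theorem local_search_21_approx (m n r : ℕ) (A : Matrix (Fin m) (Fin n) ℝ)
    (hrA : A.rank = r) (ε : ℝ) (hε : 0 ≤ ε)
    (S : Fin r → Fin m) (hS : Function.Injective S)
    (hSrank : (A.submatrix S id).rank = r)
    (T : Fin r → Fin n) (hT : Function.Injective T)
    (hdet : (A.submatrix S T).det ≠ 0)
    (hlocal : ∀ (k : Fin r) (j : Fin n), (∀ k', T k' ≠ j) →
      |((A.submatrix S T).updateCol k (fun i => A (S i) j)).det| ≤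
        (1 + ε) * |(A.submatrix S T).det|)
    (H : Matrix (Fin n) (Fin m) ℝ)
    (hHrows : ∀ k, H (T k) =
      (((A.submatrix id T)ᵀ * A.submatrix id T)⁻¹ * (A.submatrix id T)ᵀ) k)
    (hHzero : ∀ j, (∀ k, T k ≠ j) → H j = 0) :
    A * H * A = A ∧ H * A * H = H ∧ (A * H)ᵀ = A * H ∧
    ∀ G : Matrix (Fin n) (Fin m) ℝ, A * G * A = A →
      (∑ i, Real.sqrt (∑ j, (H i j) ^ 2)) ≤
        r * (1 + ε) * ∑ i, Real.sqrt (∑ j, (G i j) ^ 2) :=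
  local_search_21_approx_general m n r A hrA ε hε S T hT hdet hlocal H hHrows hHzero
end
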